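/- One has ω · (algebraMap K R (ε(α)) - σ(α) · algebraMap K R (ε(1))) = 1; that is, the inverse of the unit ω is ε(α)·1 - ε(1)·σ(α). -/

import Mathlib

open Polynomial TensorProduct

noncomputable section

variable {K : Type*} [CommRing K]

/-- The quadratic `K`-algebra `K[X]/(X² - s·X + p)`. -/
abbrev Quad (s p : K) : Type _ := AdjoinRoot (X ^ 2 - C s * X + C p)

/-- The image of `X`, i.e. the generator `α`. -/
def qα (s p : K) : Quad s p := AdjoinRoot.root _

lemma quad_aeval_root (s p : K) :
    (aeval (qα s p)) (X ^ 2 - C s * X + C p) = 0 := by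
  simp [qα, AdjoinRoot.aeval_eq, AdjoinRoot.mk_self]

/-- The involution `σ` of the quadratic algebra, with `σ α = s - α`. -/
def qσ (s p : K) : Quad s p →ₐ[K] Quad s p :=
  AdjoinRoot.liftAlgHom _ (Algebra.ofId K (Quad s p)) (algebraMap K (Quad s p) s - qα s p) ((by
    have h := quad_aeval_root s p
    simp only [map_add, map_sub, map_mul, map_pow, aeval_X, aeval_C] at h ⊢
    linear_combination h) :
      aeval (algebraMap K (Quad s p) s - qα s p) (X ^ 2 - C s * X + C p) = 0)

/-!
For `β = σ(α)` one has `α + β = s` and `αβ = p`. Hence the `K`-linear map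
`L x = ε(xα)·1 - ε(x)·β` commutes with multiplication by `α`; since `α` generates `R`,
`L` is multiplication by `L 1 = ε(α)·1 - ε(1)·β`. Evaluating at `ω` gives
`ω · L 1 = L ω = ε(ωα)·1 - ε(ω)·β = 1`.
-/

lemma LinearMap.apply_eq_mul_apply_one_of_adjoin_eq_top {R A : Type*} [CommSemiring R]
    [Semiring A] [Algebra R A] {a : A} (ha : Algebra.adjoin R {a} = ⊤) (L : A →ₗ[R] A)
    (hL : ∀ x, L (a * x) = a * L x) (x : A) : L x = x * L 1 := by
  suffices h : ∀ y, L (x * y) = x * L y by simpa using h 1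
  have hx : x ∈ Algebra.adjoin R {a} := ha ▸ Algebra.mem_top
  induction hx using Algebra.adjoin_induction with
  | mem x hx => rw [Set.mem_singleton_iff.mp hx]; exact hL
  | algebraMap r => intro y; simp only [← Algebra.smul_def, map_smul]
  | add x z _ _ hx hz => intro y; simp only [add_mul, map_add, hx, hz]
  | mul x z _ _ hx hz => intro y; rw [mul_assoc, hx, hz, mul_assoc]

section ConjugateDual

variable {R : Type*} [CommRing R] [Algebra K R]

def conjugateDual (ε : R →ₗ[K] K) (α β : R) : R →ₗ[K] R :=
  (Algebra.linearMap K R).comp (ε.comp (LinearMap.mulRight K α))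
    - (LinearMap.mulLeft K β).comp ((Algebra.linearMap K R).comp ε)

lemma conjugateDual_apply (ε : R →ₗ[K] K) (α β x : R) :
    conjugateDual ε α β x = algebraMap K R (ε (x * α)) - β * algebraMap K R (ε x) :=
  rfl

lemma conjugateDual_mul_left {s p : K} {α β : R} (hsum : α + β = algebraMap K R s)
    (hprod : α * β = algebraMap K R p) (ε : R →ₗ[K] K) (x : R) :
    conjugateDual ε α β (α * x) = α * conjugateDual ε α β x := by
  have hsq : α * x * α = s • (x * α) - p • x := by
    simp only [Algebra.smul_def]
    linear_combination x * α * hsum - x * hprod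
  rw [conjugateDual_apply, conjugateDual_apply, hsq, map_sub, map_smul, map_smul,
    smul_eq_mul, smul_eq_mul, mul_comm α x]
  simp only [map_sub, map_mul]
  linear_combination algebraMap K R (ε x) * hprod - algebraMap K R (ε (x * α)) * hsum

end ConjugateDual

lemma qα_add_qσ_qα (s p : K) : qα s p + qσ s p (qα s p) = algebraMap K (Quad s p) s := by
  simp [qσ, qα]

lemma qα_mul_qσ_qα (s p : K) : qα s p * qσ s p (qα s p) = algebraMap K (Quad s p) p := by
  have h := quad_aeval_root s p
  simp only [map_add, map_sub, map_mul, map_pow, aeval_X, aeval_C] at h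
  rw [← add_sub_cancel_left (qα s p) (qσ s p (qα s p)), qα_add_qσ_qα]
  linear_combination -h

/-- The inverse of the twisting unit `ω` is `ε(α)·1 - ε(1)·σ(α)`. -/
theorem stmt3 (s p : K) (ω : (Quad s p)ˣ) (ε : Quad s p →ₗ[K] K)
    (hω : ε (ω : Quad s p) = 0) (hωα : ε ((ω : Quad s p) * qα s p) = 1) :
    (ω : Quad s p) *
      (algebraMap K (Quad s p) (ε (qα s p))
        - qσ s p (qα s p) * algebraMap K (Quad s p) (ε 1)) = 1 := by
  have h := (conjugateDual ε (qα s p) (qσ s p (qα s p))).apply_eq_mul_apply_one_of_adjoin_eq_top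
    (AdjoinRoot.adjoinRoot_eq_top) (conjugateDual_mul_left (qα_add_qσ_qα s p)
      (qα_mul_qσ_qα s p) ε) ω
  simpa [conjugateDual_apply, hω, hωα] using h.symm

end
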